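/- Let Λ be a subring of a ring Γ, and m a two-sided ideal of Λ such that Λ is m-adically complete, Λ/m^i has finite length for all i, and Γm ⊆ mΓ. Then the category C of left Γ-modules M that are finitely generated projective as Λ-modules is a Krull-Schmidt category; in particular, every indecomposable object of C has local endomorphism ring. -/

import Mathlib

variable {Λ : Type*} [Ring Λ]

/-- The `n`-th power of a (two-sided) ideal of a possibly noncommutative ring. -/
def idealPow (m : Ideal Λ) : ℕ → Ideal Λ
  | 0 => ⊤
  | n + 1 => Ideal.span {x | ∃ a ∈ m, ∃ b ∈ idealPow m n, x = a * b}

/-- `Λ` is `m`-adically complete: `Λ → lim Λ/mⁱ` is bijective. -/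
def IsAdicCompleteRing (m : Ideal Λ) : Prop :=
  (∀ x : Λ, (∀ i, x ∈ idealPow m i) → x = 0) ∧
  (∀ a : ℕ → Λ, (∀ i, a (i + 1) - a i ∈ idealPow m i) →
    ∃ x : Λ, ∀ i, x - a i ∈ idealPow m i)

/-- The restriction of scalars of a `Γ`-module along a ring homomorphism `Λ → Γ`. -/
def restrModule {Γ : Type*} [Ring Γ] (ρ : Λ →+* Γ) (M : Type*) [AddCommGroup M]
    [Module Γ M] : Module Λ M :=
  Module.compHom M ρ

/-!
Because `Γm ⊆ mΓ`, the `Λ`-submodules `mⁱM` of a `Γ`-module `M` are `Γ`-submodules. When `M` is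
finitely generated projective over `Λ`, it is a retract of some `Λⁿ`, hence Hausdorff and complete
for this filtration, and every `M/mⁱM` has finite length.

Given an endomorphism `f` of `M`, the Fitting decompositions of the endomorphisms induced on the
`M/mⁱM` are compatible, and completeness glues their preimages into a decomposition of `M`. If `M`
is indecomposable, one of the two pieces vanishes, so `f` or `1 - f` is bijective modulo every
`mⁱM`, hence bijective: `End M` is local.

A decomposition into indecomposables is reached by splitting summands as long as possible. This
terminates since a proper splitting `N = A ⊕ B` strictly shrinks the image of `A` in the Artinian
module `M/mM` compared to that of `N`: otherwise projecting along `A` gives `B = mB`, and then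
`B = 0` by separatedness.
-/

section Filtration

open Function Submodule

variable {R M P : Type*} [Ring R] [AddCommGroup M] [Module R M] [AddCommGroup P] [Module R P]

structure IsHausdorffComplete (F : ℕ → Submodule R M) : Prop where
  eq_zero_of_forall_mem : ∀ x : M, (∀ i, x ∈ F i) → x = 0
  exists_forall_sub_mem : ∀ c : ℕ → M, (∀ i, c (i + 1) - c i ∈ F i) →
    ∃ x : M, ∀ i, x - c i ∈ F i

variable {F : ℕ → Submodule R M}

theorem IsHausdorffComplete.bijective_of_bijective_mapQ (hF : IsHausdorffComplete F)
    (hanti : Antitone F) (f : M →ₗ[R] M) (hf : ∀ i, F i ≤ (F i).comap f)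
    (hbij : ∀ i, Bijective ((F i).mapQ (F i) f (hf i))) : Bijective f := by
  have mem_of_sub_mem : ∀ i x y, f x - f y ∈ F i → x - y ∈ F i := fun i x y h ↦ by
    rw [← Submodule.Quotient.eq] at h ⊢
    exact (hbij i).1 h
  refine ⟨fun x y hxy ↦ sub_eq_zero.mp <| hF.eq_zero_of_forall_mem _ fun i ↦
    mem_of_sub_mem i x y (by simp [hxy]), fun y ↦ ?_⟩
  have hlift : ∀ i, ∃ x, f x - y ∈ F i := fun i ↦ by
    obtain ⟨q, hq⟩ := (hbij i).2 (Submodule.Quotient.mk y)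
    obtain ⟨x, rfl⟩ := Submodule.Quotient.mk_surjective _ q
    exact ⟨x, (Submodule.Quotient.eq _).mp (by simpa using hq)⟩
  -- The lifts `c i` of `y` form a Cauchy sequence because `f` is injective modulo each `F i`.
  choose c hc using hlift
  obtain ⟨x, hx⟩ := hF.exists_forall_sub_mem c fun i ↦ mem_of_sub_mem i _ _ <| by
    simpa using sub_mem (hanti i.le_succ (hc (i + 1))) (hc i)
  refine ⟨x, eq_of_sub_eq_zero <| hF.eq_zero_of_forall_mem _ fun i ↦ ?_⟩
  simpa [map_sub] using add_mem (mem_comap.mp (hf i (hx i))) (hc i)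

theorem IsHausdorffComplete.isCompl_iInf (hF : IsHausdorffComplete F)
    {A B : ℕ → Submodule R M} (hA : Antitone A) (hB : Antitone B)
    (hinf : ∀ i, A i ⊓ B i = F i) (hsup : ∀ i, A i ⊔ B i = ⊤) :
    IsCompl (⨅ i, A i) (⨅ i, B i) := by
  have hFA : ∀ i, F i ≤ A i := fun i ↦ hinf i ▸ inf_le_left
  have hFB : ∀ i, F i ≤ B i := fun i ↦ hinf i ▸ inf_le_right
  refine ⟨disjoint_iff.mpr <| eq_bot_iff.mpr fun x hx ↦ ?_,
    codisjoint_iff.mpr <| eq_top_iff.mpr fun x _ ↦ ?_⟩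
  · have hx' := mem_inf.mp hx
    refine (Submodule.mem_bot R).mpr <| hF.eq_zero_of_forall_mem x fun i ↦ hinf i ▸ ?_
    exact ⟨mem_iInf _ |>.mp hx'.1 i, mem_iInf _ |>.mp hx'.2 i⟩
  have hsplit : ∀ i, ∃ a ∈ A i, x - a ∈ B i := fun i ↦ by
    obtain ⟨a, ha, b, hb, hab⟩ := mem_sup.mp (hsup i ▸ mem_top : x ∈ A i ⊔ B i)
    exact ⟨a, ha, by rwa [← hab, add_sub_cancel_left]⟩
  -- Consecutive splittings of `x` differ by an element of `A i ⊓ B i = F i`, so they converge.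
  choose a haA haB using hsplit
  obtain ⟨y, hy⟩ := hF.exists_forall_sub_mem a fun i ↦ hinf i ▸
    ⟨sub_mem (hA i.le_succ (haA _)) (haA i),
      by simpa using sub_mem (haB i) (hB i.le_succ (haB (i + 1)))⟩
  refine mem_sup.mpr ⟨y, mem_iInf _ |>.mpr fun i ↦ ?_, x - y, mem_iInf _ |>.mpr fun i ↦ ?_,
    by abel⟩
  · simpa using add_mem (hFA i (hy i)) (haA i)
  · simpa using sub_mem (haB i) (hFB i (hy i))

theorem IsHausdorffComplete.of_retraction {I : ℕ → Ideal R} (s : M →ₗ[R] P)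
    (p : P →ₗ[R] M) (hps : p ∘ₗ s = LinearMap.id)
    (hP : IsHausdorffComplete fun i ↦ I i • (⊤ : Submodule R P)) :
    IsHausdorffComplete fun i ↦ I i • (⊤ : Submodule R M) := by
  have hp : ∀ x, p (s x) = x := LinearMap.congr_fun hps
  refine ⟨fun x hx ↦ ?_, fun c hc ↦ ?_⟩
  · rw [← hp x, hP.eq_zero_of_forall_mem _ fun i ↦ smul_top_le_comap_smul_top (I i) s (hx i),
      map_zero]
  · obtain ⟨y, hy⟩ := hP.exists_forall_sub_mem (s ∘ c) fun i ↦ by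
      simpa using smul_top_le_comap_smul_top (I i) s (hc i)
    exact ⟨p y, fun i ↦ by simpa [hp] using smul_top_le_comap_smul_top (I i) p (hy i)⟩

end Filtration

section Fitting

open Function Submodule LinearMap

variable {R M : Type*} [Ring R] [AddCommGroup M] [Module R M]

theorem LinearMap.isNilpotent_of_iSup_ker_pow_eq_top [IsNoetherian R M] {g : Module.End R M}
    (h : ⨆ n, ker (g ^ n) = ⊤) : IsNilpotent g := by
  obtain ⟨n, hn⟩ := g.eventually_iSup_ker_pow_eq.exists
  exact ⟨n, ker_eq_top.mp (hn ▸ h)⟩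

theorem LinearMap.bijective_of_iInf_range_pow_eq_top [IsNoetherian R M] {g : Module.End R M}
    (h : ⨅ n, range (g ^ n) = ⊤) : Bijective g := by
  have hsurj : Surjective g := by
    have h1 := iInf_le (fun n ↦ range (g ^ n)) 1
    rwa [h, pow_one, top_le_iff, range_eq_top] at h1
  exact ⟨IsNoetherian.injective_of_surjective_endomorphism g hsurj, hsurj⟩

variable (p : Submodule R M) {f : M →ₗ[R] M} (hf : p ≤ p.comap f)

theorem Submodule.mem_comap_mkQ_iSup_ker_pow {x : M} :
    x ∈ (⨆ n, ker (p.mapQ p f hf ^ n)).comap p.mkQ ↔ ∃ n, (f ^ n) x ∈ p := by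
  rw [mem_comap, mem_iSup_of_directed (fun n ↦ ker (p.mapQ p f hf ^ n))
    (p.mapQ p f hf).iterateKer.monotone.directed_le]
  refine exists_congr fun n ↦ ?_
  rw [mem_ker, ← mapQ_pow, mkQ_apply, mapQ_apply, Submodule.Quotient.mk_eq_zero]

theorem Submodule.mem_comap_mkQ_iInf_range_pow {x : M} :
    x ∈ (⨅ n, range (p.mapQ p f hf ^ n)).comap p.mkQ ↔ ∀ n, ∃ y, (f ^ n) y - x ∈ p := by
  simp only [mem_comap, mem_iInf, mem_range]
  refine forall_congr' fun n ↦
    ⟨fun ⟨q, hq⟩ ↦ ?_, fun ⟨y, hy⟩ ↦ ⟨Submodule.Quotient.mk y, ?_⟩⟩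
  · obtain ⟨y, rfl⟩ := Submodule.Quotient.mk_surjective _ q
    rw [← mapQ_pow, mapQ_apply, mkQ_apply] at hq
    exact ⟨y, (Submodule.Quotient.eq _).mp hq⟩
  · rw [← mapQ_pow, mapQ_apply, mkQ_apply]
    exact (Submodule.Quotient.eq _).mpr hy

theorem IsCompl.inf_comap_mkQ_eq_and_sup_eq_top {X Y : Submodule R (M ⧸ p)} (h : IsCompl X Y) :
    X.comap p.mkQ ⊓ Y.comap p.mkQ = p ∧ X.comap p.mkQ ⊔ Y.comap p.mkQ = ⊤ := by
  refine ⟨by rw [← comap_inf, h.inf_eq_bot]; exact ker_mkQ p, eq_top_iff.mpr fun x _ ↦ ?_⟩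
  obtain ⟨u, hu, v, hv, huv⟩ := mem_sup.mp (h.sup_eq_top ▸ mem_top : p.mkQ x ∈ X ⊔ Y)
  obtain ⟨y, rfl⟩ := Submodule.Quotient.mk_surjective _ u
  refine mem_sup.mpr ⟨y, hu, x - y, ?_, add_sub_cancel _ _⟩
  rwa [mem_comap, map_sub, ← huv, mkQ_apply, add_sub_cancel_left]

end Fitting

section LocalEnd

open Submodule LinearMap

variable {R M : Type*} [Ring R] [AddCommGroup M] [Module R M] {F : ℕ → Submodule R M}

theorem IsHausdorffComplete.isUnit_or_isUnit_one_sub (hF : IsHausdorffComplete F)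
    (hanti : Antitone F) [∀ i, IsNoetherian R (M ⧸ F i)] [∀ i, IsArtinian R (M ⧸ F i)]
    (hend : ∀ (f : Module.End R M) i, F i ≤ (F i).comap f)
    (hind : ¬ ∃ N₁ N₂ : Submodule R M, N₁ ≠ ⊥ ∧ N₂ ≠ ⊥ ∧ IsCompl N₁ N₂)
    (f : Module.End R M) : IsUnit f ∨ IsUnit (1 - f) := by
  set g := fun i ↦ (F i).mapQ (F i) f (hend f i)
  set A := fun i ↦ (⨆ n, ker (g i ^ n)).comap (F i).mkQ
  set B := fun i ↦ (⨅ n, range (g i ^ n)).comap (F i).mkQ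
  have hA : Antitone A := fun i j hij x hx ↦ by
    obtain ⟨n, hn⟩ := (mem_comap_mkQ_iSup_ker_pow _ _).mp hx
    exact (mem_comap_mkQ_iSup_ker_pow _ _).mpr ⟨n, hanti hij hn⟩
  have hB : Antitone B := fun i j hij x hx ↦ (mem_comap_mkQ_iInf_range_pow _ _).mpr fun n ↦ by
    obtain ⟨y, hy⟩ := (mem_comap_mkQ_iInf_range_pow _ _).mp hx n
    exact ⟨y, hanti hij hy⟩
  have hAB : ∀ i, A i ⊓ B i = F i ∧ A i ⊔ B i = ⊤ := fun i ↦
    (isCompl_iSup_ker_pow_iInf_range_pow (g i)).inf_comap_mkQ_eq_and_sup_eq_top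
  have hcompl := hF.isCompl_iInf hA hB (fun i ↦ (hAB i).1) (fun i ↦ (hAB i).2)
  have eq_top_of_comap_eq_top :
      ∀ i {X : Submodule R (M ⧸ F i)}, X.comap (F i).mkQ = ⊤ → X = ⊤ := fun i X hX ↦
    comap_injective_of_surjective (mkQ_surjective _) (hX.trans (comap_top _).symm)
  rcases eq_or_ne (⨅ i, A i) ⊥ with hbot | hne
  · have hB_top : ∀ i, B i = ⊤ := iInf_eq_top.mp (eq_top_of_bot_isCompl (hbot ▸ hcompl))
    refine .inl <| (Module.End.isUnit_iff f).mpr <| hF.bijective_of_bijective_mapQ hanti f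
      (hend f) fun i ↦ bijective_of_iInf_range_pow_eq_top (eq_top_of_comap_eq_top i (hB_top i))
  · have hB_bot : ⨅ i, B i = ⊥ := by_contra fun hne' ↦ hind ⟨_, _, hne, hne', hcompl⟩
    have hA_top : ∀ i, A i = ⊤ := iInf_eq_top.mp (eq_top_of_isCompl_bot (hB_bot ▸ hcompl))
    refine .inr <| (Module.End.isUnit_iff _).mpr <| hF.bijective_of_bijective_mapQ hanti _
      (hend _) fun i ↦ ?_
    have hnil := isNilpotent_of_iSup_ker_pow_eq_top (eq_top_of_comap_eq_top i (hA_top i))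
    have hsub : (F i).mapQ (F i) (1 - f) (hend _ i) = 1 - g i := by
      ext x; simp [g]
    rw [hsub]
    exact (Module.End.isUnit_iff _).mp hnil.isUnit_one_sub

theorem IsHausdorffComplete.isLocalRing_end [Nontrivial M] (hF : IsHausdorffComplete F)
    (hanti : Antitone F) [∀ i, IsNoetherian R (M ⧸ F i)] [∀ i, IsArtinian R (M ⧸ F i)]
    (hend : ∀ (f : Module.End R M) i, F i ≤ (F i).comap f)
    (hind : ¬ ∃ N₁ N₂ : Submodule R M, N₁ ≠ ⊥ ∧ N₂ ≠ ⊥ ∧ IsCompl N₁ N₂) :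
    IsLocalRing (Module.End R M) :=
  .of_isUnit_or_isUnit_one_sub_self (hF.isUnit_or_isUnit_one_sub hanti hend hind)

end LocalEnd

section Decomposition

open Submodule

theorem IsCompl.isCompl_sup_of_sup_eq {α : Type*} [Lattice α] [BoundedOrder α]
    [IsModularLattice α] {N N' A B : α} (h : IsCompl N N') (hAB : Disjoint A B) (hsup : A ⊔ B = N) :
    IsCompl A (B ⊔ N') :=
  ⟨hAB.disjoint_sup_right_of_disjoint_sup_left (hsup ▸ h.disjoint),
    codisjoint_iff.mpr <| by rw [← sup_assoc, hsup, h.sup_eq_top]⟩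

variable {R M : Type*} [Ring R] [AddCommGroup M] [Module R M]

def Submodule.IsIndecomposableSummand (N : Submodule R M) : Prop :=
  (∃ C, IsCompl N C) ∧ Nontrivial N ∧
    ¬ ∃ N₁ N₂ : Submodule R N, N₁ ≠ ⊥ ∧ N₂ ≠ ⊥ ∧ IsCompl N₁ N₂

theorem Submodule.exists_disjoint_sup_eq_of_isCompl {N : Submodule R M} {N₁ N₂ : Submodule R N}
    (h₁ : N₁ ≠ ⊥) (h₂ : N₂ ≠ ⊥) (h : IsCompl N₁ N₂) :
    ∃ A B : Submodule R M, A ≠ ⊥ ∧ B ≠ ⊥ ∧ Disjoint A B ∧ A ⊔ B = N := by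
  have hmap := map_injective_of_injective N.injective_subtype
  exact ⟨N₁.map N.subtype, N₂.map N.subtype, (hmap.ne_iff' (map_bot _)).mpr h₁,
    (hmap.ne_iff' (map_bot _)).mpr h₂, disjoint_map N.injective_subtype h.disjoint,
    by rw [← map_sup, h.sup_eq_top, map_subtype_top]⟩

variable {F₁ : Submodule R M}

theorem Submodule.map_mkQ_lt_of_isCompl
    (hF₁ : ∀ B C : Submodule R M, IsCompl B C → B ≤ C ⊔ F₁ → B = ⊥)
    {N N' A B : Submodule R M} (hN : IsCompl N N') (hAB : Disjoint A B) (hsup : A ⊔ B = N)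
    (hB : B ≠ ⊥) : A.map F₁.mkQ < N.map F₁.mkQ := by
  refine lt_of_le_of_ne (map_mono (hsup ▸ le_sup_left)) fun heq ↦ hB <|
    hF₁ B (A ⊔ N') (hN.isCompl_sup_of_sup_eq hAB.symm (by rw [sup_comm, hsup])) ?_
  calc B ≤ N := hsup ▸ le_sup_right
    _ ≤ (N.map F₁.mkQ).comap F₁.mkQ := le_comap_map _ _
    _ = F₁ ⊔ A := by rw [← heq, comap_map_mkQ]
    _ ≤ A ⊔ N' ⊔ F₁ := sup_le le_sup_right (le_sup_left.trans le_sup_left)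

theorem Submodule.exists_finset_supIndep_of_isCompl [IsArtinian R (M ⧸ F₁)]
    (hF₁ : ∀ B C : Submodule R M, IsCompl B C → B ≤ C ⊔ F₁ → B = ⊥)
    (N : Submodule R M) (hN : ∃ N', IsCompl N N') :
    ∃ S : Finset (Submodule R M), S.SupIndep id ∧ S.sup id = N ∧
      ∀ X ∈ S, X.IsIndecomposableSummand := by
  classical
  induction N using
    (InvImage.wf (fun N : Submodule R M ↦ N.map F₁.mkQ) wellFounded_lt).induction
    with | _ N ih => ?_
  obtain ⟨N', hN'⟩ := hN
  by_cases hbot : N = ⊥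
  · exact ⟨∅, Finset.supIndep_empty _, by simp [hbot], by simp⟩
  by_cases hsplit : ∃ N₁ N₂ : Submodule R N, N₁ ≠ ⊥ ∧ N₂ ≠ ⊥ ∧ IsCompl N₁ N₂
  · obtain ⟨N₁, N₂, h₁, h₂, h⟩ := hsplit
    obtain ⟨A, B, hA, hB, hAB, hsup⟩ := exists_disjoint_sup_eq_of_isCompl h₁ h₂ h
    have hsup' : B ⊔ A = N := by rw [sup_comm, hsup]
    obtain ⟨SA, hSA, hSA_sup, hSA_mem⟩ := ih A (map_mkQ_lt_of_isCompl hF₁ hN' hAB hsup hB)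
      ⟨_, hN'.isCompl_sup_of_sup_eq hAB hsup⟩
    obtain ⟨SB, hSB, hSB_sup, hSB_mem⟩ := ih B
      (map_mkQ_lt_of_isCompl hF₁ hN' hAB.symm hsup' hA)
      ⟨_, hN'.isCompl_sup_of_sup_eq hAB.symm hsup'⟩
    refine ⟨SA ∪ SB, hSA.union hSB (by rwa [hSA_sup, hSB_sup]),
      by rw [Finset.sup_union, hSA_sup, hSB_sup, hsup], fun X hX ↦ ?_⟩
    rcases Finset.mem_union.mp hX with hX | hX
    exacts [hSA_mem X hX, hSB_mem X hX]
  · refine ⟨{N}, Finset.supIndep_singleton _ _, Finset.sup_singleton, fun X hX ↦ ?_⟩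
    rw [Finset.mem_singleton.mp hX]
    exact ⟨⟨N', hN'⟩, nontrivial_iff_ne_bot.mpr hbot, hsplit⟩

theorem DirectSum.exists_isInternal_of_supIndep {S : Finset (Submodule R M)}
    (hS : S.SupIndep id) (hsup : S.sup id = ⊤) :
    ∃ (n : ℕ) (N : Fin n → Submodule R M), IsInternal N ∧ ∀ i, N i ∈ S := by
  let e := S.equivFin
  refine ⟨S.card, fun i ↦ e.symm i, ?_, fun i ↦ (e.symm i).2⟩
  rw [isInternal_submodule_iff_iSupIndep_and_iSup_eq_top]
  refine ⟨hS.independent.comp e.symm.injective, ?_⟩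
  rw [← hsup, Finset.sup_eq_iSup, e.symm.iSup_comp (g := fun X : S ↦ (X : Submodule R M)),
    iSup_subtype']
  rfl

end Decomposition

theorem IsFiniteLength.of_surjective_of_smul_top_le_ker {R M Q : Type*} [Ring R] [AddCommGroup M]
    [Module R M] [AddCommGroup Q] [Module R Q] [Module.Finite R M] {I : Ideal R}
    (hI : IsFiniteLength R (R ⧸ I)) {q : M →ₗ[R] Q} (hq : Function.Surjective q)
    (hker : I • ⊤ ≤ LinearMap.ker q) : IsFiniteLength R Q := by
  obtain ⟨n, p, hp⟩ := Module.Finite.exists_fin' R M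
  have hann : ∀ j, I ≤ LinearMap.ker (q ∘ₗ p ∘ₗ LinearMap.single R (fun _ ↦ R) j) :=
    fun j a ha ↦ by
      have hsingle : LinearMap.single R (fun _ ↦ R) j a = a • Pi.single j 1 := by
        rw [← Pi.single_smul, smul_eq_mul, mul_one]; rfl
      rw [LinearMap.mem_ker, LinearMap.comp_apply, LinearMap.comp_apply, hsingle, map_smul]
      exact hker (Submodule.smul_mem_smul ha Submodule.mem_top)
  let φ : (Fin n → R ⧸ I) →ₗ[R] Q := ∑ j, I.liftQ _ (hann j) ∘ₗ LinearMap.proj j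
  have hφ : Function.Surjective φ := fun y ↦ by
    obtain ⟨x, rfl⟩ := hq y
    obtain ⟨v, rfl⟩ := hp x
    refine ⟨fun j ↦ Submodule.Quotient.mk (v j), ?_⟩
    conv_rhs => rw [← Finset.univ_sum_single v]
    simp [φ]
  obtain ⟨_, _⟩ := isFiniteLength_iff_isNoetherian_isArtinian.mp hI
  have hpi : IsFiniteLength R (Fin n → R ⧸ I) :=
    isFiniteLength_iff_isNoetherian_isArtinian.mpr ⟨inferInstance, inferInstance⟩
  exact hpi.of_surjective hφ

section IdealPow

open Submodule

variable (m : Ideal Λ)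

-- `Ideal Λ` consists of left ideals; the powers of `m` are right ideals as well.
theorem idealPow_mul_mem (i : ℕ) {a : Λ} (ha : a ∈ idealPow m i) (r : Λ) :
    a * r ∈ idealPow m i := by
  induction i generalizing a r with
  | zero => trivial
  | succ i ih =>
    induction ha using Submodule.span_induction generalizing r with
    | mem x hx =>
      obtain ⟨c, hc, b, hb, rfl⟩ := hx
      exact subset_span ⟨c, hc, b * r, ih hb r, (mul_assoc c b r)⟩
    | zero => simp
    | add x y _ _ hx hy => simpa [add_mul] using add_mem (hx r) (hy r)
    | smul c x _ hx => simpa [mul_assoc] using Ideal.mul_mem_left _ c (hx r)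

theorem idealPow_succ_smul {M : Type*} [AddCommGroup M] [Module Λ M] (i : ℕ)
    (N : Submodule Λ M) : idealPow m (i + 1) • N = m • idealPow m i • N := by
  refine le_antisymm (smul_le.mpr fun c hc x hx ↦ ?_) (smul_le.mpr fun a ha y hy ↦ ?_)
  · induction hc using Submodule.span_induction with
    | mem y hy =>
      obtain ⟨a, ha, b, hb, rfl⟩ := hy
      rw [mul_smul]
      exact smul_mem_smul ha (smul_mem_smul hb hx)
    | zero => simp
    | add y z _ _ hy hz => simpa [add_smul] using add_mem hy hz
    | smul r y _ hy => simpa [mul_smul] using Submodule.smul_mem _ r hy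
  · refine smul_induction_on hy (fun b hb x hx ↦ ?_) fun y z hy hz ↦ ?_
    · have hab : a * b ∈ idealPow m (i + 1) := subset_span ⟨a, ha, b, hb, rfl⟩
      simpa [mul_smul] using smul_mem_smul hab hx
    · simpa using add_mem hy hz

theorem mem_idealPow_smul_top_pi {ι : Type*} [Finite ι] (i : ℕ) {v : ι → Λ} :
    v ∈ idealPow m i • (⊤ : Submodule Λ (ι → Λ)) ↔ ∀ j, v j ∈ idealPow m i := by
  have := Fintype.ofFinite ι
  classical
  refine ⟨fun hv j ↦ ?_, fun hv ↦ ?_⟩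
  · exact smul_induction_on hv (fun a ha w _ ↦ idealPow_mul_mem m i ha (w j))
      fun y z hy hz ↦ add_mem hy hz
  · rw [← Finset.univ_sum_single v]
    refine sum_mem fun j _ ↦ ?_
    simpa [← Pi.single_smul] using
      smul_mem_smul (hv j) (mem_top (x := (Pi.single j (1 : Λ) : ι → Λ)))

theorem isHausdorffComplete_pi (hcomplete : IsAdicCompleteRing m) (ι : Type*) [Finite ι] :
    IsHausdorffComplete fun i ↦ idealPow m i • (⊤ : Submodule Λ (ι → Λ)) := by
  refine ⟨fun x hx ↦ funext fun j ↦ hcomplete.1 _ fun i ↦ ?_, fun c hc ↦ ?_⟩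
  · exact (mem_idealPow_smul_top_pi m i).mp (hx i) j
  choose x hx using fun j ↦ hcomplete.2 (fun i ↦ c i j) fun i ↦
    (mem_idealPow_smul_top_pi m i).mp (hc i) j
  exact ⟨x, fun i ↦ (mem_idealPow_smul_top_pi m i).mpr fun j ↦ hx j i⟩

theorem isHausdorffComplete_of_projective (hcomplete : IsAdicCompleteRing m) (M : Type*)
    [AddCommGroup M] [Module Λ M] [Module.Finite Λ M] [Module.Projective Λ M] :
    IsHausdorffComplete fun i ↦ idealPow m i • (⊤ : Submodule Λ M) := by
  obtain ⟨n, p, hp⟩ := Module.Finite.exists_fin' Λ M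
  obtain ⟨s, hs⟩ := Module.projective_lifting_property p LinearMap.id hp
  exact .of_retraction s p hs (isHausdorffComplete_pi m hcomplete (Fin n))

theorem subsingleton_of_top_le_idealPow_one_smul {M : Type*} [AddCommGroup M]
    [Module Λ M] (hM : IsHausdorffComplete fun i ↦ idealPow m i • (⊤ : Submodule Λ M))
    (h : (⊤ : Submodule Λ M) ≤ idealPow m 1 • ⊤) : Subsingleton M := by
  have h₁ : idealPow m 1 • (⊤ : Submodule Λ M) = m • ⊤ := by
    rw [idealPow_succ_smul, show idealPow m 0 = ⊤ from rfl, Submodule.top_smul]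
  have htop : ∀ i, (⊤ : Submodule Λ M) ≤ idealPow m i • ⊤ := fun i ↦ by
    induction i with
    | zero => exact (Submodule.top_smul _).ge
    | succ i ih =>
      rw [idealPow_succ_smul]
      exact h.trans (h₁.trans_le (Submodule.smul_mono le_rfl ih))
  exact ⟨fun x y ↦ sub_eq_zero.mp <| hM.eq_zero_of_forall_mem _ fun i ↦ htop i mem_top⟩

end IdealPow

/-- The condition `Γm ⊆ mΓ`, where `a • 1 : Γ` is the image of `a : Λ`. -/
def Ideal.LeftMulStable (m : Ideal Λ) (Γ : Type*) [Ring Γ] [Module Λ Γ] : Prop :=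
  ∀ g : Γ, ∀ a ∈ m, g * (a • 1) ∈ m • (⊤ : Submodule Λ Γ)

section AdicFiltration

open Submodule

variable {Γ : Type*} [Ring Γ] (m : Ideal Λ) {M : Type*} [AddCommGroup M] [Module Λ M]
  [Module Γ M]

variable (Γ M) in
def adicFiltration (i : ℕ) : Submodule Γ M :=
  span Γ ((idealPow m i • ⊤ : Submodule Λ M) : Set M)

theorem antitone_adicFiltration : Antitone (adicFiltration Γ m M) :=
  antitone_nat_of_succ_le fun i ↦ span_mono <| by
    rw [idealPow_succ_smul]
    exact smul_le_right

variable [Module Λ Γ] [IsScalarTower Λ Γ M]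

theorem smul_mem_idealPow_smul_top (hm : m.LeftMulStable Γ)
    (i : ℕ) (g : Γ) {x : M} (hx : x ∈ idealPow m i • (⊤ : Submodule Λ M)) :
    g • x ∈ idealPow m i • (⊤ : Submodule Λ M) := by
  induction i generalizing g x with
  | zero => exact (top_smul _).ge mem_top
  | succ i ih =>
    rw [idealPow_succ_smul] at hx ⊢
    refine smul_induction_on hx (fun a ha y hy ↦ ?_) fun y z hy hz ↦ ?_
    · rw [← smul_one_smul Γ a y, smul_smul]
      refine smul_induction_on (p := fun γ : Γ ↦ γ • y ∈ m • idealPow m i • ⊤) (hm g a ha)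
        (fun b hb h _ ↦ ?_) fun γ δ hγ hδ ↦ ?_
      · rw [smul_assoc]
        exact smul_mem_smul hb (ih h hy)
      · rw [add_smul]
        exact add_mem hγ hδ
    · rw [smul_add]
      exact add_mem hy hz

theorem mem_adicFiltration (hm : m.LeftMulStable Γ)
    {i : ℕ} {x : M} : x ∈ adicFiltration Γ m M i ↔ x ∈ idealPow m i • (⊤ : Submodule Λ M) := by
  refine ⟨fun hx ↦ ?_, fun hx ↦ subset_span hx⟩
  induction hx using span_induction with
  | mem y hy => exact hy
  | zero => exact zero_mem _
  | add y z _ _ hy hz => exact add_mem hy hz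
  | smul g y _ hy => exact smul_mem_idealPow_smul_top m hm i g hy

theorem adicFiltration_le_comap (f : M →ₗ[Γ] M) (i : ℕ) :
    adicFiltration Γ m M i ≤ (adicFiltration Γ m M i).comap f :=
  span_le.mpr fun _ hx ↦ subset_span (smul_top_le_comap_smul_top _ (f.restrictScalars Λ) hx)

theorem isHausdorffComplete_adicFiltration
    (hm : m.LeftMulStable Γ)
    (hcomplete : IsAdicCompleteRing m) [Module.Finite Λ M] [Module.Projective Λ M] :
    IsHausdorffComplete (adicFiltration Γ m M) := by
  have h := isHausdorffComplete_of_projective m hcomplete M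
  refine ⟨fun x hx ↦ h.1 x fun i ↦ (mem_adicFiltration m hm).mp (hx i), fun c hc ↦ ?_⟩
  obtain ⟨x, hx⟩ := h.2 c fun i ↦ (mem_adicFiltration m hm).mp (hc i)
  exact ⟨x, fun i ↦ (mem_adicFiltration m hm).mpr (hx i)⟩

theorem isFiniteLength_quotient_adicFiltration (hF : ∀ i, IsFiniteLength Λ (Λ ⧸ idealPow m i))
    [Module.Finite Λ M] (i : ℕ) : IsFiniteLength Γ (M ⧸ adicFiltration Γ m M i) := by
  let q := (adicFiltration Γ m M i).mkQ.restrictScalars Λ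
  have hq : Function.Surjective q := fun y ↦ by
    obtain ⟨x, rfl⟩ := Submodule.Quotient.mk_surjective _ y
    exact ⟨x, rfl⟩
  have hker : idealPow m i • ⊤ ≤ LinearMap.ker q := fun x hx ↦
    (Quotient.mk_eq_zero (adicFiltration Γ m M i)).mpr (subset_span hx)
  have hΛ := IsFiniteLength.of_surjective_of_smul_top_le_ker (hF i) hq hker
  obtain ⟨_, _⟩ := isFiniteLength_iff_isNoetherian_isArtinian.mp hΛ
  exact isFiniteLength_iff_isNoetherian_isArtinian.mpr
    ⟨isNoetherian_of_tower Λ inferInstance, isArtinian_of_tower Λ inferInstance⟩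

end AdicFiltration

section KrullSchmidt

open Submodule

variable {Γ : Type*} [Ring Γ] [Module Λ Γ] {M : Type*} [AddCommGroup M] [Module Λ M]
  [Module Γ M] [IsScalarTower Λ Γ M]

theorem Submodule.finite_projective_of_isCompl [Module.Finite Λ M] [Module.Projective Λ M]
    {N C : Submodule Γ M} (h : IsCompl N C) : Module.Finite Λ N ∧ Module.Projective Λ N := by
  let p : M →ₗ[Λ] N := (N.projectionOnto C h).restrictScalars Λ
  let i : N →ₗ[Λ] M := N.subtype.restrictScalars Λ
  have hpi : p ∘ₗ i = LinearMap.id := LinearMap.ext (projectionOnto_apply_left h)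
  exact ⟨.of_surjective p fun x ↦ ⟨i x, LinearMap.congr_fun hpi x⟩, .of_split i p hpi⟩

variable (m : Ideal Λ)

theorem eq_bot_of_isCompl_of_le_sup_adicFiltration
    (hm : m.LeftMulStable Γ)
    (hcomplete : IsAdicCompleteRing m) [Module.Finite Λ M] [Module.Projective Λ M]
    {B C : Submodule Γ M} (h : IsCompl B C) (hle : B ≤ C ⊔ adicFiltration Γ m M 1) : B = ⊥ := by
  obtain ⟨_, _⟩ := finite_projective_of_isCompl (Λ := Λ) h
  let e : M →ₗ[Λ] B := (B.projectionOnto C h).restrictScalars Λ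
  have htop : (⊤ : Submodule Λ B) ≤ idealPow m 1 • ⊤ := fun b _ ↦ by
    obtain ⟨c, hc, y, hy, hcy⟩ := mem_sup.mp (hle b.2)
    have heb : e b = b := projectionOnto_apply_left h b
    have hec : e c = 0 := projectionOnto_apply_right h ⟨c, hc⟩
    rw [← heb, ← hcy, map_add, hec, zero_add]
    exact smul_top_le_comap_smul_top _ e ((mem_adicFiltration m hm).mp hy)
  have := subsingleton_of_top_le_idealPow_one_smul m
    (isHausdorffComplete_of_projective m hcomplete B) htop
  exact eq_bot_of_subsingleton

theorem isLocalRing_end_of_indecomposable (hm : m.LeftMulStable Γ)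
    (hcomplete : IsAdicCompleteRing m)
    (hF : ∀ i, IsFiniteLength Λ (Λ ⧸ idealPow m i)) [Module.Finite Λ M] [Module.Projective Λ M]
    [Nontrivial M] (hind : ¬ ∃ N₁ N₂ : Submodule Γ M, N₁ ≠ ⊥ ∧ N₂ ≠ ⊥ ∧ IsCompl N₁ N₂) :
    IsLocalRing (Module.End Γ M) := by
  have hfl := fun i ↦ isFiniteLength_iff_isNoetherian_isArtinian.mp
    (isFiniteLength_quotient_adicFiltration (Γ := Γ) (M := M) m hF i)
  have := fun i ↦ (hfl i).1
  have := fun i ↦ (hfl i).2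
  exact (isHausdorffComplete_adicFiltration m hm hcomplete).isLocalRing_end
    (antitone_adicFiltration m) (adicFiltration_le_comap m) hind

theorem exists_isInternal_isLocalRing_end (hm : m.LeftMulStable Γ)
    (hcomplete : IsAdicCompleteRing m)
    (hF : ∀ i, IsFiniteLength Λ (Λ ⧸ idealPow m i)) [Module.Finite Λ M] [Module.Projective Λ M] :
    ∃ (n : ℕ) (N : Fin n → Submodule Γ M), DirectSum.IsInternal N ∧
      ∀ i, (Module.Finite Λ (N i) ∧ Module.Projective Λ (N i)) ∧
        IsLocalRing (Module.End Γ (N i)) := by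
  have := (isFiniteLength_iff_isNoetherian_isArtinian.mp
    (isFiniteLength_quotient_adicFiltration (Γ := Γ) (M := M) m hF 1)).2
  obtain ⟨S, hS, hS_sup, hS_mem⟩ := exists_finset_supIndep_of_isCompl
    (fun (B C : Submodule Γ M) ↦ eq_bot_of_isCompl_of_le_sup_adicFiltration m hm hcomplete) ⊤
    ⟨⊥, isCompl_top_bot⟩
  obtain ⟨n, N, hN, hNS⟩ := DirectSum.exists_isInternal_of_supIndep hS hS_sup
  refine ⟨n, N, hN, fun i ↦ ?_⟩
  obtain ⟨⟨C, hC⟩, _, hind⟩ := hS_mem _ (hNS i)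
  obtain ⟨_, _⟩ := finite_projective_of_isCompl (Λ := Λ) hC
  exact ⟨⟨inferInstance, inferInstance⟩, isLocalRing_end_of_indecomposable m hm hcomplete hF hind⟩

end KrullSchmidt

theorem cC_krullSchmidt_general {Γ : Type*} [Ring Γ] (ρ : Λ →+* Γ)
    (m : Ideal Λ)
    (hcomplete : IsAdicCompleteRing m)
    (hF : ∀ i : ℕ, IsFiniteLength Λ (Λ ⧸ idealPow m i))
    (hGammaM : ∀ g : Γ, ∀ a ∈ m, g * ρ a ∈
      AddSubgroup.closure {x : Γ | ∃ b ∈ m, ∃ h : Γ, x = ρ b * h}) :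
    (∀ (M : Type*) [AddCommGroup M] [Module Γ M],
      (@Module.Finite Λ M _ _ (restrModule ρ M) ∧ @Module.Projective Λ _ M _ (restrModule ρ M)) →
      ∃ (n : ℕ) (N : Fin n → Submodule Γ M),
        DirectSum.IsInternal N ∧
        ∀ i, (@Module.Finite Λ (N i) _ _ (restrModule ρ (N i)) ∧
              @Module.Projective Λ _ (N i) _ (restrModule ρ (N i))) ∧
          IsLocalRing (Module.End Γ (N i))) ∧
    (∀ (M : Type*) [AddCommGroup M] [Module Γ M],
      (@Module.Finite Λ M _ _ (restrModule ρ M) ∧ @Module.Projective Λ _ M _ (restrModule ρ M)) →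
      Nontrivial M →
      (¬ ∃ N₁ N₂ : Submodule Γ M, N₁ ≠ ⊥ ∧ N₂ ≠ ⊥ ∧ IsCompl N₁ N₂) →
      IsLocalRing (Module.End Γ M)) := by
  let _ : Module Λ Γ := Module.compHom Γ ρ
  have hm : m.LeftMulStable Γ := fun g a ha ↦ by
    refine (AddSubgroup.closure_le (m • ⊤ : Submodule Λ Γ).toAddSubgroup).mpr ?_
      (mul_one (ρ a) ▸ hGammaM g a ha)
    rintro _ ⟨b, hb, h, rfl⟩
    exact Submodule.smul_mem_smul hb (Submodule.mem_top (x := h))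
  refine ⟨fun M _ _ hM ↦ ?_, fun M _ _ hM _ hind ↦ ?_⟩ <;>
    let _ : Module Λ M := restrModule ρ M <;>
    have _ : IsScalarTower Λ Γ M := ⟨fun a g x ↦ mul_smul (ρ a) g x⟩ <;>
    obtain ⟨_, _⟩ := hM
  · exact exists_isInternal_isLocalRing_end m hm hcomplete hF
  · exact isLocalRing_end_of_indecomposable m hm hcomplete hF hind

/-- **Krull-Schmidt for `C_Λ^Γ`.**  Let `Λ ⊆ Γ` be rings (via an injective ring homomorphism
`ρ`), `m` a two-sided ideal of `Λ` such that `Λ` is `m`-adically complete, `Λ/mⁱ` has finite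
length for all `i` (condition (F)), and `Γm ⊆ mΓ`.  Then the category `C` of left `Γ`-modules
which are finitely generated projective over `Λ` is Krull-Schmidt: every object decomposes into
a finite internal direct sum of `Γ`-submodules (again lying in `C`) with local endomorphism
rings; in particular every indecomposable object of `C` has local endomorphism ring. -/
theorem cC_krullSchmidt {Γ : Type*} [Ring Γ] (ρ : Λ →+* Γ) (hinj : Function.Injective ρ)
    (m : Ideal Λ) (htwoSided : ∀ a ∈ m, ∀ r : Λ, a * r ∈ m)
    (hcomplete : IsAdicCompleteRing m)
    (hF : ∀ i : ℕ, IsFiniteLength Λ (Λ ⧸ idealPow m i))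
    (hGammaM : ∀ g : Γ, ∀ a ∈ m, g * ρ a ∈
      AddSubgroup.closure {x : Γ | ∃ b ∈ m, ∃ h : Γ, x = ρ b * h}) :
    (∀ (M : Type*) [AddCommGroup M] [Module Γ M],
      (@Module.Finite Λ M _ _ (restrModule ρ M) ∧ @Module.Projective Λ _ M _ (restrModule ρ M)) →
      ∃ (n : ℕ) (N : Fin n → Submodule Γ M),
        DirectSum.IsInternal N ∧
        ∀ i, (@Module.Finite Λ (N i) _ _ (restrModule ρ (N i)) ∧
              @Module.Projective Λ _ (N i) _ (restrModule ρ (N i))) ∧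
          IsLocalRing (Module.End Γ (N i))) ∧
    (∀ (M : Type*) [AddCommGroup M] [Module Γ M],
      (@Module.Finite Λ M _ _ (restrModule ρ M) ∧ @Module.Projective Λ _ M _ (restrModule ρ M)) →
      Nontrivial M →
      (¬ ∃ N₁ N₂ : Submodule Γ M, N₁ ≠ ⊥ ∧ N₂ ≠ ⊥ ∧ IsCompl N₁ N₂) →
      IsLocalRing (Module.End Γ M)) :=
  cC_krullSchmidt_general ρ m hcomplete hF hGammaM
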